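/- arXiv:2211.03463 — 11 statements merged into one kernel-verified Lean document; each statement's English description precedes it below -/
import Mathlib

section
/- Let (X,p) be a partial metric space and let a be a positive real number such that p(x,x) = a for all x in X. Let {x_n} be a sequence in X and r ≥ 0. Then for any two points y, z in the r-limit set LIM^r x_n one has p(y,z) ≤ 2r + 2a (i.e., the diameter of the r-limit set is at most 2r + 2a). -/
/-- A partial metric on a set `X` (Matthews, 1994). -/
structure PartialMetric (X : Type*) where
  p : X → X → ℝ
  self_nonneg : ∀ x : X, 0 ≤ p x x
  self_le : ∀ x y : X, p x x ≤ p x y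
  eq_iff : ∀ x y : X, x = y ↔ (p x x = p x y ∧ p x y = p y y)
  symm : ∀ x y : X, p x y = p y x
  triangle : ∀ x y z : X, p x y ≤ p x z + p z y - p z z

namespace PartialMetric

variable {X : Type*}

/-- Convergence of a sequence in a partial metric space. -/
def Conv (P : PartialMetric X) (s : ℕ → X) (x : X) : Prop :=
  ∀ ε > (0:ℝ), ∃ k : ℕ, ∀ n ≥ k, |P.p (s n) x - P.p x x| < ε

/-- Convergence from the right. -/
def ConvRight (P : PartialMetric X) (s : ℕ → X) (x : X) : Prop :=
  ∀ ε > (0:ℝ), ∃ k : ℕ, ∀ n ≥ k, P.p x x ≤ P.p (s n) x →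
    |P.p (s n) x - P.p x x| < ε

/-- Convergence from the left. -/
def ConvLeft (P : PartialMetric X) (s : ℕ → X) (x : X) : Prop :=
  ∀ ε > (0:ℝ), ∃ k : ℕ, ∀ n ≥ k, P.p (s n) x ≤ P.p x x →
    |P.p (s n) x - P.p x x| < ε

/-- Rough convergence (`r`-convergence) of a sequence in a partial metric space. -/
def RConv (P : PartialMetric X) (s : ℕ → X) (x : X) (r : ℝ) : Prop :=
  ∀ ε > (0:ℝ), ∃ k : ℕ, ∀ n ≥ k, |P.p (s n) x - P.p x x| < r + ε

/-- Rough convergence from the right. -/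
def RConvRight (P : PartialMetric X) (s : ℕ → X) (x : X) (r : ℝ) : Prop :=
  ∀ ε > (0:ℝ), ∃ k : ℕ, ∀ n ≥ k, P.p x x ≤ P.p (s n) x →
    |P.p (s n) x - P.p x x| < r + ε

/-- Rough convergence from the left. -/
def RConvLeft (P : PartialMetric X) (s : ℕ → X) (x : X) (r : ℝ) : Prop :=
  ∀ ε > (0:ℝ), ∃ k : ℕ, ∀ n ≥ k, P.p (s n) x ≤ P.p x x →
    |P.p (s n) x - P.p x x| < r + ε

/-- The open ball of radius `ρ` centered at `x`. -/
def ball (P : PartialMetric X) (x : X) (ρ : ℝ) : Set X :=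
  {y | P.p x y < P.p x x + ρ}

/-- The topology `τ(p)` generated by the open balls. -/
def topology (P : PartialMetric X) : TopologicalSpace X :=
  TopologicalSpace.generateFrom {B | ∃ (x : X) (ρ : ℝ), 0 < ρ ∧ B = P.ball x ρ}

end PartialMetric

theorem rough_limit_set_diameter {X : Type*} [Nonempty X] (P : PartialMetric X)
    (a : ℝ) (ha : 0 < a) (hself : ∀ x : X, P.p x x = a)
    (s : ℕ → X) (r : ℝ) (hr : 0 ≤ r)
    (y z : X) (hy : P.RConv s y r) (hz : P.RConv s z r) :
    P.p y z ≤ 2 * r + 2 * a := by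
  by_contra hcon
  push_neg at hcon
  set ε := (P.p y z - (2*r + a)) / 4 with hε
  have haa : 2*r + a < 2*r + 2*a := by linarith
  have hεpos : 0 < ε := by
    have : 2*r + 2*a < P.p y z := hcon
    simp only [hε]; linarith
  obtain ⟨k1, hk1⟩ := hy ε hεpos
  obtain ⟨k2, hk2⟩ := hz ε hεpos
  set n := max k1 k2
  have h1 := hk1 n (le_max_left _ _)
  have h2 := hk2 n (le_max_right _ _)
  rw [abs_lt] at h1 h2
  have ht := P.triangle y z (s n)
  have hsy : P.p (s n) y = P.p y (s n) := P.symm _ _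
  rw [hself y] at h1
  rw [hself z] at h2
  rw [hself (s n)] at ht
  rw [P.symm (s n) y] at h1
  rw [P.symm (s n) z] at h2
  rw [P.symm (s n) z] at ht
  linarith [h1.2, h2.2, hcon]
end

section
/- Let (X,p) be a partial metric space and r ≥ 0. If a sequence {x_n} converges to x in (X,p), then every point y of the closed ball of radius r centered at x (i.e., with p(x,y) ≤ p(x,x) + r) satisfying p(x,x) = p(y,y) belongs to the right r-limit set R-LIM^r x_n, i.e., {x_n} is r-convergent to y from the right. -/
theorem closedBall_subset_right_rough_limit {X : Type*} [Nonempty X] (P : PartialMetric X)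
    (r : ℝ) (hr : 0 ≤ r) (s : ℕ → X) (x : X) (hconv : P.Conv s x)
    (y : X) (hy : P.p x y ≤ P.p x x + r) (hxy : P.p x x = P.p y y) :
    P.RConvRight s y r := by
  intro ε hε
  obtain ⟨k, hk⟩ := hconv ε hε
  refine ⟨k, fun n hn hge => ?_⟩
  rw [abs_of_nonneg (sub_nonneg.2 hge)]
  have t := P.triangle (s n) y x
  have h1 := abs_lt.1 (hk n hn)
  linarith
end

section
/- Let (X,p) be a partial metric space and r ≥ 0. Let {x_n} be a sequence in X that is r-convergent from the right to some point, and let {y_n} be a sequence of points each belonging to the right r-limit set R-LIM^r x_n such that {y_n} converges to y in (X,p). Then y belongs to R-LIM^r x_n, i.e., {x_n} is r-convergent to y from the right. -/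
theorem right_rough_limit_of_conv_in_right_rough_limit_set {X : Type*} [Nonempty X]
    (P : PartialMetric X) (r : ℝ) (hr : 0 ≤ r) (s : ℕ → X)
    (hs : ∃ z : X, P.RConvRight s z r)
    (y : ℕ → X) (hy : ∀ n : ℕ, P.RConvRight s (y n) r)
    (ylim : X) (hconv : P.Conv y ylim) :
    P.RConvRight s ylim r := by
  intro ε hε
  obtain ⟨k1, hk1⟩ := hconv (ε/2) (by linarith)
  have hm : |P.p (y k1) ylim - P.p ylim ylim| < ε/2 := hk1 k1 le_rfl
  obtain ⟨k2, hk2⟩ := hy k1 (ε/2) (by linarith)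
  refine ⟨k2, fun n hn hle => ?_⟩
  have htri := P.triangle (s n) ylim (y k1)
  have h1 : P.p (s n) (y k1) - P.p (y k1) (y k1) < r + ε/2 := by
    by_cases hc : P.p (y k1) (y k1) ≤ P.p (s n) (y k1)
    · have := hk2 n hn hc
      have := (abs_lt.mp this).2
      linarith
    · push_neg at hc
      linarith
  have h2 := (abs_lt.mp hm).2
  rw [abs_of_nonneg (by linarith)]
  linarith
end

section
/- Let (X,p) be a partial metric space, r ≥ 0, and let {x_n} be a sequence in X that is r-convergent from the right to some point. Then the right r-limit set R-LIM^r x_n is a closed subset of X with respect to the topology τ(p) generated by the open balls. -/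
theorem right_rough_limit_set_isClosed {X : Type*} [Nonempty X]
    (P : PartialMetric X) (r : ℝ) (hr : 0 ≤ r) (s : ℕ → X)
    (hs : ∃ z : X, P.RConvRight s z r) :
    @IsClosed X P.topology {x : X | P.RConvRight s x r} := by
  classical
  letI := P.topology
  refine ⟨?_⟩
  show TopologicalSpace.GenerateOpen {B | ∃ (x : X) (ρ : ℝ), 0 < ρ ∧ B = P.ball x ρ} _
  have key : ∀ y, ¬ P.RConvRight s y r → ∃ ρ > (0:ℝ), ∀ z ∈ P.ball y ρ, ¬ P.RConvRight s z r := by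
    intro y hy
    unfold PartialMetric.RConvRight at hy
    push_neg at hy
    obtain ⟨ε, hε, hbad⟩ := hy
    refine ⟨ε/2, by positivity, ?_⟩
    intro z hz hzL
    obtain ⟨k, hk⟩ := hzL (ε/2) (by positivity)
    obtain ⟨n, hn, hcond, hge⟩ := hbad k
    have tri := P.triangle (s n) y z
    have hball : P.p y z < P.p y y + ε/2 := hz
    have h1 : P.p (s n) z - P.p z z < r + ε/2 := by
      by_cases h : P.p z z ≤ P.p (s n) z
      · have h2 := abs_lt.mp (hk n hn h)
        linarith [h2.2]
      · push_neg at h; linarith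
    have habs : |P.p (s n) y - P.p y y| = P.p (s n) y - P.p y y :=
      abs_of_nonneg (by linarith)
    rw [habs] at hge
    have hzy : P.p z y = P.p y z := P.symm z y
    linarith
  have hU : {x : X | P.RConvRight s x r}ᶜ =
      ⋃₀ {B | (∃ (x : X) (ρ : ℝ), 0 < ρ ∧ B = P.ball x ρ) ∧
        B ⊆ {x : X | P.RConvRight s x r}ᶜ} := by
    ext y
    constructor
    · intro hy
      obtain ⟨ρ, hρ, hsub⟩ := key y hy
      refine ⟨P.ball y ρ, ⟨⟨y, ρ, hρ, rfl⟩, fun z hz => hsub z hz⟩, ?_⟩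
      show P.p y y < P.p y y + ρ
      linarith
    · rintro ⟨B, ⟨_, hsub⟩, hyB⟩
      exact hsub hyB
  rw [hU]
  exact TopologicalSpace.GenerateOpen.sUnion _ fun B hB =>
    TopologicalSpace.GenerateOpen.basic _ hB.1
end

section
/- Let (X,p) be a partial metric space and r ≥ 0. Let {x_n} be a sequence in X that is r-convergent to some point, and let {y_n} be a sequence of points each belonging to the r-limit set LIM^r x_n such that {y_n} converges to y in (X,p). Then y belongs to the right r-limit set R-LIM^r x_n, i.e., {x_n} is r-convergent to y from the right. -/
theorem right_rough_limit_of_conv_in_rough_limit_set {X : Type*} [Nonempty X]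
    (P : PartialMetric X) (r : ℝ) (hr : 0 ≤ r) (s : ℕ → X)
    (hs : ∃ z : X, P.RConv s z r)
    (y : ℕ → X) (hy : ∀ n : ℕ, P.RConv s (y n) r)
    (ylim : X) (hconv : P.Conv y ylim) :
    P.RConvRight s ylim r := by
  intro ε hε
  obtain ⟨k1, hk1⟩ := hconv (ε/2) (by linarith)
  obtain ⟨k2, hk2⟩ := hy k1 (ε/2) (by linarith)
  refine ⟨k2, fun n hn hle => ?_⟩
  rw [abs_of_nonneg (by linarith)]
  have h1 := abs_lt.mp (hk1 k1 le_rfl)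
  have h2 := abs_lt.mp (hk2 n hn)
  have htri := P.triangle (s n) ylim (y k1)
  linarith
end

section
/- Let (X,p) be a partial metric space, r ≥ 0, and let {x_n}, {y_n} be sequences in X such that for every ε > 0 there exists k ∈ ℕ with p(x_n, y_n) ≤ ε for all n ≥ k. Suppose {x_n} is r-convergent to x, and suppose that for every ε > 0 there exists m ∈ ℕ with p(x_n, x_n) ≤ ε for all n ≥ m. Then {y_n} is r-convergent to x from the right. -/
theorem rconvRight_of_close_seq {X : Type*} [Nonempty X] (P : PartialMetric X)
    (r : ℝ) (hr : 0 ≤ r) (x y : ℕ → X) (x₀ : X)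
    (hclose : ∀ ε > (0:ℝ), ∃ k : ℕ, ∀ n ≥ k, P.p (x n) (y n) ≤ ε)
    (hx : P.RConv x x₀ r)
    (hself : ∀ ε > (0:ℝ), ∃ m : ℕ, ∀ n ≥ m, P.p (x n) (x n) ≤ ε) :
    P.RConvRight y x₀ r := by
  intro ε hε
  obtain ⟨k1, hk1⟩ := hclose (ε/2) (by linarith)
  obtain ⟨k2, hk2⟩ := hx (ε/2) (by linarith)
  refine ⟨max k1 k2, fun n hn hge => ?_⟩
  have h1 := hk1 n (le_trans (le_max_left _ _) hn)
  have h2 := hk2 n (le_trans (le_max_right _ _) hn)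
  have htri := P.triangle (y n) x₀ (x n)
  have hs := P.self_nonneg (x n)
  rw [abs_of_nonneg (by linarith)]
  rw [abs_lt] at h2
  have hsym : P.p (y n) (x n) = P.p (x n) (y n) := P.symm _ _
  have : P.p (y n) x₀ ≤ P.p (x n) (y n) + P.p (x n) x₀ - P.p (x n) (x n) := by
    rw [← hsym]; linarith
  linarith [h2.2]
end

section
/- Let (X,p) be a partial metric space, r ≥ 0, and let {x_n}, {y_n} be sequences in X such that for every ε > 0 there exists k ∈ ℕ with p(x_n, y_n) ≤ ε for all n ≥ k. Suppose {y_n} is r-convergent to x, and suppose that for every ε > 0 there exists m ∈ ℕ with p(y_n, y_n) ≤ ε for all n ≥ m. Then {x_n} is r-convergent to x from the right. -/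
theorem rconvRight_of_close_seq_conv {X : Type*} [Nonempty X] (P : PartialMetric X)
    (r : ℝ) (hr : 0 ≤ r) (x y : ℕ → X) (x₀ : X)
    (hclose : ∀ ε > (0:ℝ), ∃ k : ℕ, ∀ n ≥ k, P.p (x n) (y n) ≤ ε)
    (hy : P.RConv y x₀ r)
    (hself : ∀ ε > (0:ℝ), ∃ m : ℕ, ∀ n ≥ m, P.p (y n) (y n) ≤ ε) :
    P.RConvRight x x₀ r := by
  intro ε hε
  obtain ⟨k1, hk1⟩ := hclose (ε/3) (by linarith)
  obtain ⟨k2, hk2⟩ := hy (ε/3) (by linarith)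
  refine ⟨max k1 k2, fun n hn hge => ?_⟩
  have h1 := hk1 n (le_trans (le_max_left _ _) hn)
  have h2 := hk2 n (le_trans (le_max_right _ _) hn)
  have htri := P.triangle (x n) x₀ (y n)
  have hyself := P.self_nonneg (y n)
  have h2' : P.p (y n) x₀ - P.p x₀ x₀ < r + ε/3 := lt_of_abs_lt h2
  rw [abs_of_nonneg (by linarith)]
  linarith
end

section
/- Let (X,p) be a partial metric space, r ≥ 0, and let {x_n}, {y_n} be sequences in X such that for every ε > 0 there exists k ∈ ℕ with p(x_n, y_n) ≤ ε for all n ≥ k. Suppose {x_n} is r-convergent to x, and suppose there is a positive number c such that p(x_n, x_n) ≤ c for all n. Then {y_n} is (r + c)-convergent to x from the right. -/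
theorem rconvRight_add_c_of_close_seq {X : Type*} [Nonempty X] (P : PartialMetric X)
    (r : ℝ) (hr : 0 ≤ r) (x y : ℕ → X) (x₀ : X)
    (hclose : ∀ ε > (0:ℝ), ∃ k : ℕ, ∀ n ≥ k, P.p (x n) (y n) ≤ ε)
    (hx : P.RConv x x₀ r)
    (c : ℝ) (hc : 0 < c) (hself : ∀ n : ℕ, P.p (x n) (x n) ≤ c) :
    P.RConvRight y x₀ (r + c) := by
  intro ε hε
  obtain ⟨k1, hk1⟩ := hclose (ε/2) (by linarith)
  obtain ⟨k2, hk2⟩ := hx (ε/2) (by linarith)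
  refine ⟨max k1 k2, fun n hn hge => ?_⟩
  have h1 := hk1 n (le_trans (le_max_left _ _) hn)
  have h2 := hk2 n (le_trans (le_max_right _ _) hn)
  have htri := P.triangle (y n) x₀ (x n)
  have hs := P.self_nonneg (x n)
  have hsym : P.p (y n) (x n) = P.p (x n) (y n) := P.symm _ _
  rw [abs_lt] at h2 ⊢
  constructor
  · linarith
  · linarith [htri, hsym]
end

section
/- Let (X,p) be a partial metric space, r ≥ 0, and let {x_n}, {y_n} be sequences in X such that for every ε > 0 there exists k ∈ ℕ with p(x_n, y_n) ≤ ε for all n ≥ k. Suppose {y_n} is r-convergent to x, and suppose there is a positive number d such that p(y_n, y_n) ≤ d for all n. Then {x_n} is (r + d)-convergent to x from the right. -/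
theorem rconvRight_add_d_of_close_seq {X : Type*} [Nonempty X] (P : PartialMetric X)
    (r : ℝ) (hr : 0 ≤ r) (x y : ℕ → X) (x₀ : X)
    (hclose : ∀ ε > (0:ℝ), ∃ k : ℕ, ∀ n ≥ k, P.p (x n) (y n) ≤ ε)
    (hy : P.RConv y x₀ r)
    (d : ℝ) (hd : 0 < d) (hself : ∀ n : ℕ, P.p (y n) (y n) ≤ d) :
    P.RConvRight x x₀ (r + d) := by
  intro ε hε
  obtain ⟨k1, hk1⟩ := hclose (ε/2) (by positivity)
  obtain ⟨k2, hk2⟩ := hy (ε/2) (by positivity)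
  refine ⟨max k1 k2, fun n hn hge => ?_⟩
  have h1 := hk1 n (le_trans (le_max_left _ _) hn)
  have h2 := hk2 n (le_trans (le_max_right _ _) hn)
  have htri := P.triangle (x n) x₀ (y n)
  have hsnn := P.self_nonneg (y n)
  rw [abs_of_nonneg (by linarith)]
  rw [abs_lt] at h2
  have hsym : P.p (x n) (y n) = P.p (y n) (x n) := P.symm _ _
  linarith [h2.2]
end

section
/- Let (X,p) be a partial metric space and r ≥ 0. If {x_n} is r-convergent to x and {y_n} is r-convergent to y in (X,p), then the real sequence {p(x_n, y_n)} is rough convergent to p(x,y) from the right of roughness degree 2r, i.e., for every ε > 0 there exists k ∈ ℕ such that p(x_n, y_n) − p(x,y) < 2r + ε for all n ≥ k with p(x_n, y_n) ≥ p(x,y). -/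
theorem dist_seq_rough_conv_right {X : Type*} [Nonempty X] (P : PartialMetric X)
    (r : ℝ) (hr : 0 ≤ r) (x y : ℕ → X) (a b : X)
    (hx : P.RConv x a r) (hy : P.RConv y b r) :
    ∀ ε > (0:ℝ), ∃ k : ℕ, ∀ n ≥ k, P.p a b ≤ P.p (x n) (y n) →
      P.p (x n) (y n) - P.p a b < 2 * r + ε := by
  intro ε hε
  obtain ⟨k1, h1⟩ := hx (ε/2) (by linarith)
  obtain ⟨k2, h2⟩ := hy (ε/2) (by linarith)
  refine ⟨max k1 k2, fun n hn _ => ?_⟩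
  have e1 := h1 n (le_trans (le_max_left _ _) hn)
  have e2 := h2 n (le_trans (le_max_right _ _) hn)
  have t1 := P.triangle (x n) (y n) a
  have t2 := P.triangle a (y n) b
  have h1' : P.p (x n) a - P.p a a < r + ε/2 := (abs_lt.mp e1).2
  have h2' : P.p (y n) b - P.p b b < r + ε/2 := (abs_lt.mp e2).2
  linarith [P.symm (y n) b]
end

section
/- Let (X,p) be a partial metric space, let a be a real constant such that p(x,x) = a for all x ∈ X, let r > 0, and let {x_n} be a sequence in X. If c is a cluster point of {x_n}, then LIM^r x_n is contained in the closed ball of radius r centered at c, i.e., every y with {x_n} r-convergent to y satisfies p(c,y) ≤ p(c,c) + r. -/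
theorem rough_limit_set_subset_closedBall_of_clusterPoint {X : Type*} [Nonempty X]
    (P : PartialMetric X) (a : ℝ) (hself : ∀ x : X, P.p x x = a)
    (r : ℝ) (hr : 0 < r) (s : ℕ → X) (c : X)
    (hc : ∀ ε > (0:ℝ), ∀ k : ℕ, ∃ k₁ : ℕ, k₁ > k ∧ |P.p (s k₁) c - P.p c c| < ε)
    (y : X) (hy : P.RConv s y r) :
    P.p c y ≤ P.p c c + r := by
  by_contra h
  push_neg at h
  set ε := (P.p c y - (P.p c c + r)) / 2 with hε
  have hεpos : 0 < ε := by simp [hε]; linarith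
  obtain ⟨k, hk⟩ := hy (ε/2) (by linarith)
  obtain ⟨k₁, hk₁, habs⟩ := hc (ε/2) (by linarith) k
  have h1 : P.p (s k₁) c < P.p c c + ε/2 := by
    have := abs_lt.mp habs; linarith [this.2]
  have h2 : P.p (s k₁) y < P.p y y + r + ε/2 := by
    have := abs_lt.mp (hk k₁ (le_of_lt hk₁)); linarith [this.2]
  have htri := P.triangle c y (s k₁)
  have hsy : P.p (s k₁) y = P.p y (s k₁) := P.symm _ _
  have hcs : P.p (s k₁) c = P.p c (s k₁) := P.symm _ _
  have hs1 := hself (s k₁)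
  have hs2 := hself c
  have hs3 := hself y
  -- p c y ≤ p c (s k₁) + p (s k₁) y - a < (a+ε/2) + (a+r+ε/2) - a = a + r + ε
  have : P.p c y < P.p c c + r + ε := by
    rw [hcs] at h1; rw [hsy] at h2; linarith
  linarith
end
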